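/- Let k be a field, H a Hopf algebra over k, and B a right coideal subalgebra of H. Set I := HB⁺. Then I = H·(H^{co H/I})⁺, the left ideal of H generated by {b ∈ H^{co H/I} : ε(b) = 0}; that is, Φ ∘ Ψ ∘ Φ = Φ for the assignments Ψ(I) = H^{co H/I} and Φ(B) = HB⁺. -/

import Mathlib

/-!
Since `Δ(B) ⊆ B ⊗ H` and `π_I(b) = ε(b) π_I(1)` for `b ∈ B`, every element of `B` is
`H/I`-coinvariant, so `I ⊆ H·(H^{co H/I})⁺`. Conversely, applying `id ⊗ ε` to the coinvariance
condition shows `(H^{co H/I})⁺ ⊆ I` for any subspace `I`, and `I` is a left ideal.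
-/

open TensorProduct

noncomputable section

namespace HopfGalois

variable (k : Type*) (H : Type*) [Field k] [Ring H] [HopfAlgebra k H]

/-- The linear map `H ⊗ H → H`, `x ⊗ y ↦ ε(x) • y`. -/
def epsTensorId : H ⊗[k] H →ₗ[k] H :=
  (TensorProduct.lid k H).toLinearMap ∘ₗ
    TensorProduct.map (Coalgebra.counit : H →ₗ[k] k) (LinearMap.id : H →ₗ[k] H)

/-- The linear map `H ⊗ H → H`, `x ⊗ y ↦ ε(y) • x`. -/
def idTensorEps : H ⊗[k] H →ₗ[k] H :=
  (TensorProduct.rid k H).toLinearMap ∘ₗ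
    TensorProduct.map (LinearMap.id : H →ₗ[k] H) (Coalgebra.counit : H →ₗ[k] k)

/-- `x ⊗ y ↦ Σ x₍₁₎ ⊗ π_I(x₍₂₎) ⊗ y`. -/
def cotensorL (I : Submodule k H) : H ⊗[k] H →ₗ[k] H ⊗[k] ((H ⧸ I) ⊗[k] H) :=
  TensorProduct.map (LinearMap.id : H →ₗ[k] H)
      (TensorProduct.map I.mkQ (LinearMap.id : H →ₗ[k] H))
    ∘ₗ (TensorProduct.assoc k H H H).toLinearMap
    ∘ₗ TensorProduct.map (Coalgebra.comul : H →ₗ[k] H ⊗[k] H) (LinearMap.id : H →ₗ[k] H)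

/-- `x ⊗ y ↦ Σ x ⊗ π_I(y₍₁₎) ⊗ y₍₂₎`. -/
def cotensorR (I : Submodule k H) : H ⊗[k] H →ₗ[k] H ⊗[k] ((H ⧸ I) ⊗[k] H) :=
  TensorProduct.map (LinearMap.id : H →ₗ[k] H)
    (TensorProduct.map I.mkQ (LinearMap.id : H →ₗ[k] H)
      ∘ₗ (Coalgebra.comul : H →ₗ[k] H ⊗[k] H))

/-- The cotensor product `H □^{H/I} H` as a subspace of `H ⊗ H`. -/
def cotensor (I : Submodule k H) : Submodule k (H ⊗[k] H) :=
  LinearMap.ker (cotensorL k H I - cotensorR k H I)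

/-- The subspace of coinvariants `H^{co H/I}`:
`{x ∈ H : Σ π_I(x₍₁₎) ⊗ x₍₂₎ = π_I(1) ⊗ x}`. -/
def coinv (I : Submodule k H) : Submodule k H :=
  LinearMap.ker
    ((TensorProduct.map I.mkQ (LinearMap.id : H →ₗ[k] H)
        ∘ₗ (Coalgebra.comul : H →ₗ[k] H ⊗[k] H))
      - TensorProduct.mk k (H ⧸ I) H (I.mkQ 1))

/-- A left ideal coideal: a left ideal `I` with `ε(I) = 0` and `Δ(I) ⊆ I ⊗ H + H ⊗ I`. -/
structure IsLeftIdealCoideal (I : Submodule k H) : Prop where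
  mul_mem_left : ∀ (h x : H), x ∈ I → h * x ∈ I
  counit_zero : ∀ x ∈ I, (Coalgebra.counit : H →ₗ[k] k) x = 0
  comul_mem : ∀ x ∈ I, (Coalgebra.comul : H →ₗ[k] H ⊗[k] H) x ∈
    LinearMap.range (TensorProduct.map I.subtype (LinearMap.id : H →ₗ[k] H)) ⊔
      LinearMap.range (TensorProduct.map (LinearMap.id : H →ₗ[k] H) I.subtype)

/-- A right coideal subalgebra: a subalgebra `B` with `Δ(B) ⊆ B ⊗ H`. -/
def IsRightCoidealSubalgebra (B : Subalgebra k H) : Prop :=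
  ∀ b ∈ B, (Coalgebra.comul : H →ₗ[k] H ⊗[k] H) b ∈
    LinearMap.range
      (TensorProduct.map (Subalgebra.toSubmodule B).subtype (LinearMap.id : H →ₗ[k] H))

/-- The left ideal of `H` generated by a subset `S`, as a `k`-subspace of `H`. -/
def leftIdealGen (S : Set H) : Submodule k H :=
  Submodule.span k {z : H | ∃ h : H, ∃ b ∈ S, z = h * b}

/-- `S⁺ = S ∩ ker ε`. -/
def plusPart (S : Set H) : Set H :=
  {b ∈ S | (Coalgebra.counit : H →ₗ[k] k) b = 0}

/-- `H·S⁺`, the left ideal of `H` generated by `S ∩ ker ε`. -/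
def HSplus (S : Set H) : Submodule k H :=
  leftIdealGen k H (plusPart k H S)

/-- The subspace `J_B ⊆ H ⊗ H` spanned by `{xb ⊗ y − x ⊗ by : x, y ∈ H, b ∈ B}`,
so that `H ⊗_B H = (H ⊗ H)/J_B`. -/
def JB (S : Set H) : Submodule k (H ⊗[k] H) :=
  Submodule.span k
    {z : H ⊗[k] H | ∃ x y : H, ∃ b ∈ S, z = (x * b) ⊗ₜ[k] y - x ⊗ₜ[k] (b * y)}

/-- `B` is the equalizer of the two canonical maps `H → H ⊗_B H`. -/
def equalizerCond (S : Set H) : Prop :=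
  {h : H | h ⊗ₜ[k] (1 : H) - (1 : H) ⊗ₜ[k] h ∈ JB k H S} = S

/-- `H/I` is the coequalizer of `ε ⊗ id` and `id ⊗ ε` restricted to `H □^{H/I} H`, i.e.
`I` is the subspace spanned by `{Σ ε(xᵢ)yᵢ − Σ xᵢε(yᵢ) : Σ xᵢ ⊗ yᵢ ∈ H □^{H/I} H}`. -/
def coequalizerCond (I : Submodule k H) : Prop :=
  I = Submodule.map (epsTensorId k H - idTensorEps k H) (cotensor k H I)

variable {k H}

local notation "ε" => (Coalgebra.counit : H →ₗ[k] k)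
local notation "Δ" => (Coalgebra.comul : H →ₗ[k] H ⊗[k] H)

lemma leftIdealGen_le {S : Set H} {I : Submodule k H} (hI : ∀ h x : H, x ∈ I → h * x ∈ I)
    (hS : S ⊆ I) : leftIdealGen k H S ≤ I := by
  rw [leftIdealGen, Submodule.span_le]
  rintro _ ⟨h, b, hb, rfl⟩
  exact hI h b (hS hb)

lemma mul_mem_leftIdealGen (S : Set H) (h : H) {x : H} (hx : x ∈ leftIdealGen k H S) :
    h * x ∈ leftIdealGen k H S := by
  induction hx using Submodule.span_induction with
  | mem _ hz =>
    obtain ⟨h', b, hb, rfl⟩ := hz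
    exact Submodule.subset_span ⟨h * h', b, hb, (mul_assoc h h' b).symm⟩
  | zero => simp
  | add _ _ _ _ hx hy => simpa [mul_add] using add_mem hx hy
  | smul c _ _ hx => simpa [mul_smul_comm] using Submodule.smul_mem _ c hx

lemma HSplus_mono {S T : Set H} (hST : S ⊆ T) : HSplus k H S ≤ HSplus k H T :=
  Submodule.span_mono fun _ ⟨h, b, hb, hz⟩ => ⟨h, b, ⟨hST hb.1, hb.2⟩, hz⟩

lemma mkQ_HSplus_eq_counit_smul (B : Subalgebra k H) {b : H} (hb : b ∈ B) :
    (HSplus k H (B : Set H)).mkQ b = ε b • (HSplus k H (B : Set H)).mkQ 1 := by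
  rw [← map_smul, ← sub_eq_zero, ← map_sub, Submodule.mkQ_apply, Submodule.Quotient.mk_eq_zero]
  refine Submodule.subset_span ⟨1, b - ε b • 1, ⟨?_, ?_⟩, (one_mul _).symm⟩
  · exact sub_mem hb (Subalgebra.smul_mem B (Subalgebra.one_mem B) _)
  · simp [Bialgebra.counit_one]

lemma mem_coinv_iff (I : Submodule k H) (x : H) :
    x ∈ coinv k H I ↔ I.mkQ.rTensor H (Δ x) = I.mkQ 1 ⊗ₜ[k] x := by
  simp only [coinv, LinearMap.mem_ker, LinearMap.sub_apply, sub_eq_zero]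
  rfl

/-- Write `Δ b ∈ B ⊗ H`, replace `f` by `ε(·) • m` there, and use `(ε ⊗ id) Δ = 1 ⊗ id`. -/
lemma rTensor_comul_eq_tmul {M : Type*} [AddCommGroup M] [Module k M] (B : Subalgebra k H)
    (hB : IsRightCoidealSubalgebra k H B) (f : H →ₗ[k] M) (m : M)
    (hf : ∀ b ∈ B, f b = ε b • m) {b : H} (hb : b ∈ B) :
    f.rTensor H (Δ b) = m ⊗ₜ[k] b := by
  let ι := (Subalgebra.toSubmodule B).subtype
  obtain ⟨t, ht⟩ := hB b hb
  have hfι : f ∘ₗ ι = LinearMap.toSpanSingleton k M m ∘ₗ (ε ∘ₗ ι) :=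
    LinearMap.ext fun c => hf c c.2
  calc f.rTensor H (Δ b)
      = (f ∘ₗ ι).rTensor H t := by rw [← ht, LinearMap.rTensor_comp_apply]; rfl
    _ = (LinearMap.toSpanSingleton k M m).rTensor H (LinearMap.rTensor H ε (Δ b)) := by
      rw [hfι, LinearMap.rTensor_comp_apply, LinearMap.rTensor_comp_apply, ← ht]; rfl
    _ = m ⊗ₜ[k] b := by simp [Coalgebra.rTensor_counit_comul]

lemma subset_coinv_HSplus (B : Subalgebra k H) (hB : IsRightCoidealSubalgebra k H B) :
    (B : Set H) ⊆ coinv k H (HSplus k H (B : Set H)) := fun _ hb =>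
  (mem_coinv_iff _ _).2 <|
    rTensor_comul_eq_tmul B hB _ _ (fun _ hc => mkQ_HSplus_eq_counit_smul B hc) hb

/-- Applying `id ⊗ ε` turns the coinvariance equation into `π_I(x) = ε(x) π_I(1)`. -/
lemma plusPart_coinv_subset (I : Submodule k H) : plusPart k H (coinv k H I) ⊆ I := by
  rintro x ⟨hx, hε⟩
  rw [SetLike.mem_coe, mem_coinv_iff] at hx
  have hcomm : LinearMap.lTensor (H ⧸ I) ε (I.mkQ.rTensor H (Δ x)) =
      I.mkQ.rTensor k (LinearMap.lTensor H ε (Δ x)) := by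
    rw [← LinearMap.comp_apply, LinearMap.lTensor_comp_rTensor, ← LinearMap.rTensor_comp_lTensor]
    rfl
  have hπ : I.mkQ x ⊗ₜ[k] (1 : k) = 0 := by
    rw [hx, Coalgebra.lTensor_counit_comul] at hcomm
    simpa [hε] using hcomm.symm
  rw [SetLike.mem_coe, ← Submodule.Quotient.mk_eq_zero]
  simpa using congrArg (TensorProduct.rid k (H ⧸ I)) hπ

/-- For a right coideal subalgebra `B` and `I := HB⁺`,
one has `I = H·(H^{co H/I})⁺`; that is, `Φ ∘ Ψ ∘ Φ = Φ`. -/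
theorem HSplus_coinv_HSplus (k H : Type*) [Field k] [Ring H] [HopfAlgebra k H]
    (B : Subalgebra k H) (hB : IsRightCoidealSubalgebra k H B) :
    HSplus k H (B : Set H) =
      HSplus k H ((coinv k H (HSplus k H (B : Set H)) : Submodule k H) : Set H) :=
  le_antisymm (HSplus_mono (subset_coinv_HSplus B hB))
    (leftIdealGen_le (fun h _ => mul_mem_leftIdealGen _ h) (plusPart_coinv_subset _))

end HopfGalois
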